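/- arXiv:math/0610010 — 6 statements merged into one kernel-verified Lean document; each statement's English description precedes it below -/
import Mathlib

section
/- Let c' ≥ 4 be an integer and let K = {k ∈ ℤ : c' + 3 ≤ k ≤ 2c' + 2 and k + c' ≢ 3 (mod 6)}. If n₀ ≥ 2(c' + 4), then either n₀ can be written as a sum k₁ + k₂ + ... + k_s with each kᵢ ∈ K, or c' = 6 and n₀ = 29. -/
/-- Auxiliary: sums of `s ≥ 2` elements of `K` cover the interval `[s*a, s*(2c'+2)]`,
where `a, a+1` are elements of `K` near the bottom of the interval. -/
theorem stmt3_aux (c' a : ℤ) (hc' : 4 ≤ c')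
    (ha1 : c' + 3 ≤ a) (ha2 : a ≤ c' + 4)
    (haP : (a + c') % 6 ≠ 3) (haP1 : (a + 1 + c') % 6 ≠ 3) :
    ∀ s : ℕ, 2 ≤ s → ∀ n : ℤ, (s : ℤ) * a ≤ n → n ≤ (s : ℤ) * (2 * c' + 2) →
      ∃ l : List ℤ, l ≠ [] ∧
        (∀ k ∈ l, c' + 3 ≤ k ∧ k ≤ 2 * c' + 2 ∧ (k + c') % 6 ≠ 3) ∧ l.sum = n := by
  intro s hs
  induction s, hs using Nat.le_induction with
  | base =>
      intro n h1 h2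
      push_cast at h1 h2
      by_cases hn : n ≤ a + (2 * c' + 2)
      · by_cases hy : (n - a + c') % 6 = 3
        · refine ⟨[a + 1, n - a - 1], by simp, ?_, ?_⟩
          · intro k hk
            simp only [List.mem_cons, List.mem_singleton, List.not_mem_nil, or_false] at hk
            rcases hk with rfl | rfl
            · exact ⟨by omega, by omega, haP1⟩
            · exact ⟨by omega, by omega, by omega⟩
          · simp only [List.sum_cons, List.sum_nil]; ring
        · refine ⟨[a, n - a], by simp, ?_, ?_⟩
          · intro k hk
            simp only [List.mem_cons, List.mem_singleton, List.not_mem_nil, or_false] at hk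
            rcases hk with rfl | rfl
            · exact ⟨ha1, by omega, haP⟩
            · exact ⟨by omega, by omega, hy⟩
          · simp only [List.sum_cons, List.sum_nil]; ring
      · by_cases hx : (n - (2 * c' + 2) + c') % 6 = 3
        · refine ⟨[n - (2 * c' + 2) + 1, 2 * c' + 1], by simp, ?_, ?_⟩
          · intro k hk
            simp only [List.mem_cons, List.mem_singleton, List.not_mem_nil, or_false] at hk
            rcases hk with rfl | rfl
            · exact ⟨by omega, by omega, by omega⟩
            · exact ⟨by omega, by omega, by omega⟩
          · simp only [List.sum_cons, List.sum_nil]; ring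
        · refine ⟨[n - (2 * c' + 2), 2 * c' + 2], by simp, ?_, ?_⟩
          · intro k hk
            simp only [List.mem_cons, List.mem_singleton, List.not_mem_nil, or_false] at hk
            rcases hk with rfl | rfl
            · exact ⟨by omega, by omega, hx⟩
            · exact ⟨by omega, by omega, by omega⟩
          · simp only [List.sum_cons, List.sum_nil]; ring
  | succ s hs ih =>
      intro n h1 h2
      have e1 : ((s : ℤ) + 1) * a = (s : ℤ) * a + a := by ring
      have e2 : ((s : ℤ) + 1) * (2 * c' + 2) = (s : ℤ) * (2 * c' + 2) + (2 * c' + 2) := by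
        ring
      push_cast at h1 h2
      by_cases hn : n - a ≤ (s : ℤ) * (2 * c' + 2)
      · obtain ⟨l, hl0, hl1, hl2⟩ := ih (n - a) (by linarith) hn
        refine ⟨a :: l, by simp, ?_, ?_⟩
        · intro k hk
          rcases List.mem_cons.1 hk with rfl | hk
          · exact ⟨ha1, by omega, haP⟩
          · exact hl1 k hk
        · rw [List.sum_cons, hl2]; ring
      · have h9 : (2 : ℤ) ≤ (s : ℤ) := by exact_mod_cast hs
        have h10 : (0 : ℤ) ≤ 2 * c' + 2 - a := by omega
        have h11 : 1 * (2 * c' + 2 - a) ≤ (s : ℤ) * (2 * c' + 2 - a) :=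
          mul_le_mul_of_nonneg_right (by linarith) h10
        have e3 : (s : ℤ) * (2 * c' + 2 - a) = (s : ℤ) * (2 * c' + 2) - (s : ℤ) * a := by
          ring
        obtain ⟨l, hl0, hl1, hl2⟩ := ih (n - (2 * c' + 2)) (by linarith) (by linarith)
        refine ⟨(2 * c' + 2) :: l, by simp, ?_, ?_⟩
        · intro k hk
          rcases List.mem_cons.1 hk with rfl | hk
          · exact ⟨by omega, by omega, by omega⟩
          · exact hl1 k hk
        · rw [List.sum_cons, hl2]; ring

/-- Lemma 10 of the paper: for c' ≥ 4 and n₀ ≥ 2(c'+4), either n₀ is a sum of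
elements of K = {k : c'+3 ≤ k ≤ 2c'+2, k + c' ≢ 3 (mod 6)}, or c' = 6 and n₀ = 29. -/
theorem stmt_3 (c' n₀ : ℤ) (hc' : 4 ≤ c') (hn : 2 * (c' + 4) ≤ n₀) :
    (∃ l : List ℤ, l ≠ [] ∧
      (∀ k ∈ l, c' + 3 ≤ k ∧ k ≤ 2 * c' + 2 ∧ (k + c') % 6 ≠ 3) ∧ l.sum = n₀) ∨
    (c' = 6 ∧ n₀ = 29) := by
  -- choose a bottom pair a, a+1 in K
  obtain ⟨a, hA, haP, haP1⟩ :
      ∃ a : ℤ, (a = c' + 3 ∨ (a = c' + 4 ∧ (c' + 3 + c') % 6 = 3)) ∧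
        (a + c') % 6 ≠ 3 ∧ (a + 1 + c') % 6 ≠ 3 := by
    by_cases h : (c' + 3 + c') % 6 = 3
    · exact ⟨c' + 4, Or.inr ⟨rfl, h⟩, by omega, by omega⟩
    · exact ⟨c' + 3, Or.inl rfl, h, by omega⟩
  have ha1 : c' + 3 ≤ a := by rcases hA with h | ⟨h, _⟩ <;> omega
  have ha2 : a ≤ c' + 4 := by rcases hA with h | ⟨h, _⟩ <;> omega
  have ha0 : 0 < a := by omega
  set s : ℤ := n₀ / a with hsdef
  set r : ℤ := n₀ % a with hrdef
  have hd : a * s + r = n₀ := Int.mul_ediv_add_emod n₀ a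
  have hr0 : 0 ≤ r := Int.emod_nonneg n₀ (by omega)
  have hr1 : r < a := Int.emod_lt_of_pos n₀ ha0
  have hs2 : 2 ≤ s := by
    by_contra hcon
    push_neg at hcon
    have h1 : a * s ≤ a * 1 := mul_le_mul_of_nonneg_left (by omega) (by omega)
    linarith
  by_cases hcase : n₀ ≤ s * (2 * c' + 2)
  · left
    obtain ⟨m, hm⟩ : ∃ m : ℕ, (m : ℤ) = s := ⟨s.toNat, Int.toNat_of_nonneg (by omega)⟩
    have hm2 : 2 ≤ m := by omega
    refine stmt3_aux c' a hc' ha1 ha2 haP haP1 m hm2 n₀ ?_ ?_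
    · rw [hm]; linarith
    · rw [hm]; exact hcase
  · push_neg at hcase
    -- gap case: s*(2c'+2) < n₀ ≤ a*s + a - 1
    have hgap : s * (2 * c' + 2) ≤ a * s + a - 2 := by linarith
    rcases hA with h | ⟨h, h3⟩
    · -- a = c'+3 : no gap possible
      exfalso
      have h4 : 2 * (2 * c' + 2 - a) ≤ s * (2 * c' + 2 - a) :=
        mul_le_mul_of_nonneg_right hs2 (by omega)
      have e3 : s * (2 * c' + 2 - a) = s * (2 * c' + 2) - s * a := by ring
      have : c' ≤ 3 := by
        subst h
        nlinarith
      omega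
    · -- a = c'+4 and bottom element excluded, so 3 ∣ c'
      rcases eq_or_lt_of_le hs2 with hs2' | hs3
      · -- s = 2: forces c' = 6 and n₀ = 29
        right
        have hc6 : c' ≤ 6 := by
          have h4 : 2 * (2 * c' + 2 - a) ≤ s * (2 * c' + 2 - a) :=
            mul_le_mul_of_nonneg_right hs2 (by omega)
          have e3 : s * (2 * c' + 2 - a) = s * (2 * c' + 2) - s * a := by ring
          subst h
          nlinarith
        have hc'6 : c' = 6 := by omega
        constructor
        · exact hc'6
        · -- with s = 2, c' = 6, a = 10 : 28 < n₀ ≤ 29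
          subst hc'6
          have ha' : a = 10 := by omega
          rw [ha', ← hs2'] at hd
          omega
      · -- s ≥ 3: no gap possible
        exfalso
        have h4 : 3 * (2 * c' + 2 - a) ≤ s * (2 * c' + 2 - a) :=
          mul_le_mul_of_nonneg_right (by omega) (by omega)
        have e3 : s * (2 * c' + 2 - a) = s * (2 * c' + 2) - s * a := by ring
        have : c' ≤ 4 := by
          subst h
          nlinarith
        omega
end

section
/- For c' ≥ 7 and K = {k ∈ ℤ : c' + 3 ≤ k ≤ 2c' + 2 and k + c' ≢ 3 (mod 6)}, every integer n₀ with 2(c'+4) ≤ n₀ ≤ 3(c'+4) − 1 can be written as n₀ = k₁ + k₂ with k₁, k₂ ∈ K and k₁ ≤ k₂ ≤ k₁ + 3. -/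
/-- For c' ≥ 7, every n₀ with 2(c'+4) ≤ n₀ ≤ 3(c'+4) − 1 is a sum k₁ + k₂ with
k₁, k₂ ∈ K = {k : c'+3 ≤ k ≤ 2c'+2, k + c' ≢ 3 (mod 6)} and k₁ ≤ k₂ ≤ k₁ + 3. -/
theorem stmt_4 (c' n₀ : ℤ) (hc' : 7 ≤ c')
    (h1 : 2 * (c' + 4) ≤ n₀) (h2 : n₀ ≤ 3 * (c' + 4) - 1) :
    ∃ k₁ k₂ : ℤ,
      (c' + 3 ≤ k₁ ∧ k₁ ≤ 2 * c' + 2 ∧ (k₁ + c') % 6 ≠ 3) ∧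
      (c' + 3 ≤ k₂ ∧ k₂ ≤ 2 * c' + 2 ∧ (k₂ + c') % 6 ≠ 3) ∧
      k₁ ≤ k₂ ∧ k₂ ≤ k₁ + 3 ∧ n₀ = k₁ + k₂ := by
  obtain ⟨h, hh⟩ | ⟨h, hh⟩ := Int.even_or_odd n₀
  · -- n₀ = h + h
    by_cases hA : (h + c') % 6 = 3
    · exact ⟨h - 1, h + 1, ⟨by omega, by omega, by omega⟩,
        ⟨by omega, by omega, by omega⟩, by omega, by omega, by omega⟩
    · exact ⟨h, h, ⟨by omega, by omega, by omega⟩,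
        ⟨by omega, by omega, by omega⟩, by omega, by omega, by omega⟩
  · -- n₀ = 2h + 1
    by_cases hA : (h + c') % 6 = 3 ∨ (h + 1 + c') % 6 = 3
    · exact ⟨h - 1, h + 2, ⟨by omega, by omega, by omega⟩,
        ⟨by omega, by omega, by omega⟩, by omega, by omega, by omega⟩
    · exact ⟨h, h + 1, ⟨by omega, by omega, by omega⟩,
        ⟨by omega, by omega, by omega⟩, by omega, by omega, by omega⟩
end

section
/- For every positive integer m, the circulant digraph Circ(6m; 2, 3, 6m−2) has a hamiltonian cycle. Concretely: the sequence of arcs following, from each current vertex v, steps of +2, +3, or −2 (mod 6m) according to the explicit pattern 0 →(+2) 4 →(+3) 7 →(−2) 3 →(+3) 6 →(+2) 10 →(+3) 13 →(−2) 9 →(+3) 12 → ... → 6m−2 →(+3) 1 →(−2) 6m−3 →(+3) 0 visits every vertex of ℤ_{6m} exactly once and returns to 0. -/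
/-- The pattern of offsets within each block of 6 consecutive vertices:
the block starting at 6j is visited in the order 6j, 6j+2, 6j+4, 6j+7, 6j+5, 6j+3. -/
def pat : ℕ → ℕ
  | 0 => 0
  | 1 => 2
  | 2 => 4
  | 3 => 7
  | 4 => 5
  | _ => 3

lemma key (n a b : ℕ) (hn : 0 < n) (ha : a < n + n) (hb : b < n + n)
    (h : a % n = b % n) : a = b ∨ a = b + n ∨ b = a + n := by
  have ha' : a % n = a ∨ a % n + n = a := by
    rcases Nat.lt_or_ge a n with h1 | h1
    · exact Or.inl (Nat.mod_eq_of_lt h1)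
    · right
      have : a % n = a - n := by
        rw [Nat.mod_eq_sub_mod h1, Nat.mod_eq_of_lt (by omega)]
      omega
  have hb' : b % n = b ∨ b % n + n = b := by
    rcases Nat.lt_or_ge b n with h1 | h1
    · exact Or.inl (Nat.mod_eq_of_lt h1)
    · right
      have : b % n = b - n := by
        rw [Nat.mod_eq_sub_mod h1, Nat.mod_eq_of_lt (by omega)]
      omega
  omega

/-- For every m ≥ 1, the explicit sequence
0, 2, 4, 7, 5, 3, 6, 8, 10, 13, 11, 9, 12, ... (mod 6m)
(steps +2, +2, +3, −2, −2, +3 repeated) is a hamiltonian cycle of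
Circ(6m; 2, 3, 6m − 2): it starts at 0, visits every vertex of ℤ_{6m}
exactly once (and returns to 0), every step being by 2, 3, or 6m − 2 (mod 6m). -/
theorem stmt_8 (m : ℕ) (hm : 0 < m)
    (x : Fin (6 * m) → ZMod (6 * m))
    (hx : x = fun (i : Fin (6 * m)) => ((6 * ((i : ℕ) / 6) + pat ((i : ℕ) % 6) : ℕ) : ZMod (6 * m))) :
    Function.Bijective x ∧ x ⟨0, by omega⟩ = 0 ∧
      ∀ i : Fin (6 * m),
        x ⟨((i : ℕ) + 1) % (6 * m), Nat.mod_lt _ i.pos⟩ - x i ∈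
          ({2, 3, ((6 * m - 2 : ℕ) : ZMod (6 * m))} : Set (ZMod (6 * m))) := by
  subst hx
  haveI : NeZero (6 * m) := ⟨by omega⟩
  have hc2 : ((6 * m - 2 : ℕ) : ZMod (6 * m)) = -2 := by
    rw [Nat.cast_sub (by omega), ZMod.natCast_self]; ring
  have h0 : ((6 * m : ℕ) : ZMod (6 * m)) = 0 := ZMod.natCast_self _
  refine ⟨?_, ?_, ?_⟩
  · rw [Fintype.bijective_iff_injective_and_card]
    refine ⟨?_, by simp [ZMod.card]⟩
    intro i j hij
    have h1 : (6 * ((i : ℕ) / 6) + pat ((i : ℕ) % 6)) % (6 * m)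
        = (6 * ((j : ℕ) / 6) + pat ((j : ℕ) % 6)) % (6 * m) :=
      (ZMod.natCast_eq_natCast_iff _ _ _).mp hij
    have hi := i.isLt
    have hj := j.isLt
    obtain ⟨a, r, hr, hdi⟩ : ∃ a r, r < 6 ∧ (i : ℕ) = 6 * a + r :=
      ⟨(i : ℕ) / 6, (i : ℕ) % 6, Nat.mod_lt _ (by omega), by omega⟩
    obtain ⟨b, s, hs, hdj⟩ : ∃ a r, r < 6 ∧ (j : ℕ) = 6 * a + r :=
      ⟨(j : ℕ) / 6, (j : ℕ) % 6, Nat.mod_lt _ (by omega), by omega⟩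
    have e1 : (i : ℕ) / 6 = a := by omega
    have e2 : (i : ℕ) % 6 = r := by omega
    have e3 : (j : ℕ) / 6 = b := by omega
    have e4 : (j : ℕ) % 6 = s := by omega
    rw [e1, e2, e3, e4] at h1
    apply Fin.ext
    interval_cases r <;> interval_cases s <;> simp only [pat] at h1 <;>
      (have hk := key (6 * m) _ _ (by omega) (by omega) (by omega) h1; omega)
  · norm_num [pat]
  · intro i
    have hi := i.isLt
    obtain ⟨a, r, hr, hd⟩ : ∃ a r, r < 6 ∧ (i : ℕ) = 6 * a + r :=
      ⟨(i : ℕ) / 6, (i : ℕ) % 6, Nat.mod_lt _ (by omega), by omega⟩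
    have e1 : (i : ℕ) / 6 = a := by omega
    have e2 : (i : ℕ) % 6 = r := by omega
    simp only [Set.mem_insert_iff, Set.mem_singleton_iff, Fin.val_mk] at *
    rw [e1, e2]
    by_cases hw : (i : ℕ) + 1 = 6 * m
    · have hv : ((i : ℕ) + 1) % (6 * m) = 0 := by rw [hw, Nat.mod_self]
      have ha : a = m - 1 := by omega
      have hr5 : r = 5 := by omega
      rw [hv, ha, hr5]
      right; left
      have : (6 * (m - 1) + pat 5 : ℕ) = 6 * m - 3 := by simp [pat]; omega
      rw [this]
      have h3 : ((6 * m - 3 : ℕ) : ZMod (6 * m)) = -3 := by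
        rw [Nat.cast_sub (by omega), ZMod.natCast_self]; ring
      simp [pat, h3]
    · have hv : ((i : ℕ) + 1) % (6 * m) = (i : ℕ) + 1 := Nat.mod_eq_of_lt (by omega)
      rw [hv]
      interval_cases r
      · have f1 : ((i : ℕ) + 1) / 6 = a := by omega
        have f2 : ((i : ℕ) + 1) % 6 = 1 := by omega
        rw [f1, f2]; left; simp only [pat]; push_cast; ring
      · have f1 : ((i : ℕ) + 1) / 6 = a := by omega
        have f2 : ((i : ℕ) + 1) % 6 = 2 := by omega
        rw [f1, f2]; left; simp only [pat]; push_cast; ring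
      · have f1 : ((i : ℕ) + 1) / 6 = a := by omega
        have f2 : ((i : ℕ) + 1) % 6 = 3 := by omega
        rw [f1, f2]; right; left; simp only [pat]; push_cast; ring
      · have f1 : ((i : ℕ) + 1) / 6 = a := by omega
        have f2 : ((i : ℕ) + 1) % 6 = 4 := by omega
        rw [f1, f2]; right; right; rw [hc2]; simp only [pat]; push_cast; ring
      · have f1 : ((i : ℕ) + 1) / 6 = a := by omega
        have f2 : ((i : ℕ) + 1) % 6 = 5 := by omega
        rw [f1, f2]; right; right; rw [hc2]; simp only [pat]; push_cast; ring
      · have f1 : ((i : ℕ) + 1) / 6 = a + 1 := by omega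
        have f2 : ((i : ℕ) + 1) % 6 = 0 := by omega
        rw [f1, f2]; right; left; simp only [pat]; push_cast; ring
end

section
/- Let c' > 3 and let u, w be integers with u + c' + 2 ≤ w ≤ u + 2c' and w − u ≡ 2c' (mod 3). Set ε ∈ {1,2} so that w − u − c' − ε − 1 is even. Then the walk in ℤ (viewing vertices as integers in I(u,w) = {u, u+1, ..., w}) given by u+1 →(+2)... → w−c'−ε →(+3)... → u+c'−ε+3 →(+2)... → w →(−c') w−c' →(+3)... → u+c' →(−c') u →(+2)... → w−c'+ε−3 →(+3)... → u+c'+ε →(+2)... → w−1, using only steps +2, +3, and −c', visits every element of I(u,w) exactly once. -/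
/-!
The walk is a concatenation of arithmetic progressions of differences 2, 3 and −c', each
starting where the previous one ends, so all its steps are allowed. Every vertex lies in
I(u,w), two progressions never share a vertex (an interval-and-congruence check), and the
lengths add up to w − u + 1, so the walk visits each vertex of I(u,w) exactly once.
-/

/-- `seg a s k` is the arithmetic progression a, a + s, ..., a + s(k−1):
the vertices of a walk of k − 1 steps of size s starting at a, omitting the
final endpoint a + s·k (which starts the next segment of the walk). -/
def seg (a s : ℤ) (k : ℕ) : List ℤ := (List.range k).map fun i => a + s * i

theorem List.Nodup.mem_iff_mem_of_subset_of_card_le {α : Type*} [DecidableEq α] {l : List α}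
    {s : Finset α} (hl : l.Nodup) (hsub : ∀ x ∈ l, x ∈ s) (hcard : s.card ≤ l.length) (x : α) :
    x ∈ l ↔ x ∈ s := by
  have hsub' : l.toFinset ⊆ s := fun y hy => hsub y (List.mem_toFinset.mp hy)
  rw [← Finset.eq_of_subset_of_card_le hsub' (List.toFinset_card_of_nodup hl ▸ hcard),
    List.mem_toFinset]

theorem seg_eq_map_range (a s : ℤ) (k : ℕ) :
    seg a s k = (List.range k).map fun i : ℕ => a + s * i := by
  simp [seg, ← List.map_eq_flatMap, List.map_map]

theorem mem_seg {a s z : ℤ} {k : ℕ} : z ∈ seg a s k ↔ ∃ i < k, a + s * i = z := by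
  simp [seg_eq_map_range]

theorem mem_seg_iff {a s z : ℤ} {k : ℕ} (hs : 0 < s) :
    z ∈ seg a s k ↔ a ≤ z ∧ z < a + s * k ∧ s ∣ z - a := by
  rw [mem_seg]
  constructor
  · rintro ⟨i, hi, rfl⟩
    have : (i : ℤ) < k := by exact_mod_cast hi
    exact ⟨by nlinarith, by nlinarith, ⟨i, by ring⟩⟩
  · rintro ⟨hlo, hhi, j, hj⟩
    lift j to ℕ using (by nlinarith)
    have : (j : ℤ) < k := by nlinarith
    exact ⟨j, by exact_mod_cast this, by omega⟩

theorem nodup_seg (a : ℤ) {s : ℤ} (hs : s ≠ 0) (k : ℕ) : (seg a s k).Nodup := by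
  rw [seg_eq_map_range]
  refine List.nodup_range.map fun i j hij => ?_
  exact_mod_cast mul_left_cancel₀ hs (add_left_cancel hij)

@[simp] theorem seg_length (a s : ℤ) (k : ℕ) : (seg a s k).length = k := by
  simp [seg_eq_map_range]

theorem seg_zero (a s : ℤ) : seg a s 0 = [] := rfl

theorem seg_one (a s : ℤ) : seg a s 1 = [a] := by simp [seg_eq_map_range]

theorem seg_succ (a s : ℤ) (k : ℕ) : seg a s (k + 1) = a :: seg (a + s) s k := by
  simp only [seg_eq_map_range, List.range_succ_eq_map, List.map_cons, List.map_map]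
  congr 1
  · simp
  · refine List.map_congr_left fun i _ => ?_
    simp only [Function.comp_apply]; push_cast; ring

theorem seg_succ' (a s : ℤ) (k : ℕ) : seg a s (k + 1) = seg a s k ++ [a + s * k] := by
  simp [seg_eq_map_range, List.range_succ]

theorem isChain_seg {R : ℤ → ℤ → Prop} {s : ℤ} (h : ∀ x, R x (x + s)) (a : ℤ) (k : ℕ) :
    (seg a s k).IsChain R := by
  induction k generalizing a with
  | zero => exact List.isChain_nil
  | succ k ih =>
    rw [seg_succ]
    refine (ih (a + s)).cons fun y hy => ?_
    cases k with
    | zero => simp [seg_zero] at hy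
    | succ k => rw [seg_succ] at hy; cases hy; exact h a

/-- The walk from `a` that takes, for each `(s, k)` in turn, `k` steps of size `s`; as for `seg`,
the final endpoint is not listed. -/
def segs : ℤ → List (ℤ × ℕ) → List ℤ
  | _, [] => []
  | a, (s, k) :: ps => seg a s k ++ segs (a + s * k) ps

theorem head?_segs {a x : ℤ} {ps : List (ℤ × ℕ)} (h : x ∈ (segs a ps).head?) : x = a := by
  induction ps generalizing a with
  | nil => simp [segs] at h
  | cons p ps ih =>
    obtain ⟨s, _ | k⟩ := p
    · simpa using ih (by simpa [segs, seg_zero] using h)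
    · simp only [segs, seg_succ, List.cons_append, List.head?_cons, Option.mem_def,
        Option.some.injEq] at h
      exact h.symm

theorem isChain_segs {R : ℤ → ℤ → Prop} (a : ℤ) {ps : List (ℤ × ℕ)}
    (h : ∀ p ∈ ps, ∀ x, R x (x + p.1)) : (segs a ps).IsChain R := by
  induction ps generalizing a with
  | nil => exact List.isChain_nil
  | cons p ps ih =>
    obtain ⟨s, k⟩ := p
    refine (isChain_seg (h _ List.mem_cons_self) a k).append
      (ih _ fun q hq => h q (List.mem_cons_of_mem _ hq)) fun x hx y hy => ?_
    obtain _ | k := k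
    · simp [seg_zero] at hx
    · simp only [seg_succ', List.getLast?_concat, Option.mem_def, Option.some.injEq] at hx
      rw [head?_segs hy, ← hx]
      convert h _ List.mem_cons_self (a + s * k) using 1
      push_cast; ring

section Path

variable {u w c' ε : ℤ} {a b c : ℕ}

/-- The path P(u,w) of the theorem, with its run lengths given as natural numbers. -/
def pathP (u w c' ε : ℤ) (a b c : ℕ) : List ℤ :=
  seg (u + 1) 2 a ++ seg (w - c' - ε) 3 (b + 1) ++ seg (u + c' - ε + 3) 2 c ++ [w] ++
    seg (w - c') 3 b ++ [u + c'] ++ seg u 2 c ++ seg (w - c' + ε - 3) 3 (b + 1) ++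
    seg (u + c' + ε) 2 a ++ [w - 1]

theorem pathP_eq_segs (ha : 2 * (a : ℤ) = w - u - c' - ε - 1) (hb : 3 * (b : ℤ) = u + 2 * c' - w)
    (hc : (c : ℤ) = a + ε - 1) :
    pathP u w c' ε a b c = segs (u + 1) [(2, a), (3, b + 1), (2, c), (-c', 1), (3, b), (-c', 1),
      (2, c), (3, b + 1), (2, a), (2, 1)] := by
  simp only [pathP, segs, seg_one, List.append_nil, List.append_assoc]
  -- match the two sides run by run; the run starts agree by linear arithmetic
  repeat' (first | (congr 1 <;> push_cast <;> omega) | congr 1)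

theorem mem_Icc_of_mem_pathP (ha : 2 * (a : ℤ) = w - u - c' - ε - 1)
    (hb : 3 * (b : ℤ) = u + 2 * c' - w) (hc : (c : ℤ) = a + ε - 1) {z : ℤ}
    (hz : z ∈ pathP u w c' ε a b c) : z ∈ Finset.Icc u w := by
  simp only [pathP, List.mem_append, mem_seg_iff (two_pos : (0 : ℤ) < 2),
    mem_seg_iff (three_pos : (0 : ℤ) < 3), List.mem_singleton] at hz
  rw [Finset.mem_Icc]
  omega

theorem nodup_pathP (hε : ε = 1 ∨ ε = 2) (ha : 2 * (a : ℤ) = w - u - c' - ε - 1)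
    (hb : 3 * (b : ℤ) = u + 2 * c' - w) (hc : (c : ℤ) = a + ε - 1) :
    (pathP u w c' ε a b c).Nodup := by
  simp only [pathP, List.append_assoc, List.nodup_append]
  repeat' apply And.intro
  all_goals first
    | exact nodup_seg _ (by norm_num) _
    | exact List.nodup_singleton _
    | (intro z hz y hy hzy
       simp only [mem_seg_iff (two_pos : (0 : ℤ) < 2), mem_seg_iff (three_pos : (0 : ℤ) < 3),
         List.mem_singleton, List.mem_append] at hz hy
       omega)

theorem card_Icc_le_length_pathP (ha : 2 * (a : ℤ) = w - u - c' - ε - 1)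
    (hb : 3 * (b : ℤ) = u + 2 * c' - w) (hc : (c : ℤ) = a + ε - 1) :
    (Finset.Icc u w).card ≤ (pathP u w c' ε a b c).length := by
  simp only [pathP, List.length_append, seg_length, List.length_singleton, Int.card_Icc]
  omega

end Path

theorem stmt_12_general (c' u w ε : ℤ)
    (h1 : u + c' + 2 ≤ w) (h2 : w ≤ u + 2 * c')
    (h3 : (w - u) % 3 = (2 * c') % 3)
    (hε : ε = 1 ∨ ε = 2) (hpar : 2 ∣ (w - u - c' - ε - 1))
    (L : List ℤ)
    (hL : L =
      seg (u + 1) 2 ((w - c' - ε - (u + 1)) / 2).toNat ++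
      seg (w - c' - ε) 3 ((u + 2 * c' + 3 - w) / 3).toNat ++
      seg (u + c' - ε + 3) 2 ((w - (u + c' - ε + 3)) / 2).toNat ++
      [w] ++
      seg (w - c') 3 ((u + 2 * c' - w) / 3).toNat ++
      [u + c'] ++
      seg u 2 ((w - c' + ε - 3 - u) / 2).toNat ++
      seg (w - c' + ε - 3) 3 ((u + 2 * c' + 3 - w) / 3).toNat ++
      seg (u + c' + ε) 2 ((w - 1 - (u + c' + ε)) / 2).toNat ++
      [w - 1]) :
    L.Chain' (fun a b => b - a ∈ ({2, 3, -c'} : Set ℤ)) ∧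
    L.Nodup ∧
    ∀ z : ℤ, z ∈ L ↔ u ≤ z ∧ z ≤ w := by
  obtain ⟨a, ha⟩ : ∃ a : ℕ, 2 * (a : ℤ) = w - u - c' - ε - 1 :=
    ⟨((w - u - c' - ε - 1) / 2).toNat, by omega⟩
  obtain ⟨b, hb⟩ : ∃ b : ℕ, 3 * (b : ℤ) = u + 2 * c' - w :=
    ⟨((u + 2 * c' - w) / 3).toNat, by omega⟩
  obtain ⟨c, hc⟩ : ∃ c : ℕ, (c : ℤ) = a + ε - 1 := ⟨((a : ℤ) + ε - 1).toNat, by omega⟩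
  have hLP : L = pathP u w c' ε a b c := by
    rw [hL, pathP, show ((w - c' - ε - (u + 1)) / 2).toNat = a by omega,
      show ((u + 2 * c' + 3 - w) / 3).toNat = b + 1 by omega,
      show ((w - (u + c' - ε + 3)) / 2).toNat = c by omega,
      show ((u + 2 * c' - w) / 3).toNat = b by omega,
      show ((w - c' + ε - 3 - u) / 2).toNat = c by omega,
      show ((w - 1 - (u + c' + ε)) / 2).toNat = a by omega]
  subst hLP
  have hnodup := nodup_pathP hε ha hb hc
  refine ⟨?_, hnodup, fun z => ?_⟩
  · rw [pathP_eq_segs ha hb hc]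
    exact isChain_segs _ (by simp)
  · rw [hnodup.mem_iff_mem_of_subset_of_card_le (fun _ => mem_Icc_of_mem_pathP ha hb hc)
      (card_Icc_le_length_pathP ha hb hc), Finset.mem_Icc]

/-- Lemma 7 of the paper, case w − u ≡ 2c' (mod 3): with c' > 3,
u + c' + 2 ≤ w ≤ u + 2c', and ε ∈ {1, 2} chosen so that w − u − c' − ε − 1 is
even, the explicit walk
u+1 →(+2)… → w−c'−ε →(+3)… → u+c'−ε+3 →(+2)… → w →(−c') w−c' →(+3)… → u+c'
→(−c') u →(+2)… → w−c'+ε−3 →(+3)… → u+c'+ε →(+2)… → w−1,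
using only steps +2, +3 and −c', visits every element of
I(u,w) = {u, u+1, …, w} exactly once. -/
theorem stmt_12 (c' u w ε : ℤ) (hc' : 3 < c')
    (h1 : u + c' + 2 ≤ w) (h2 : w ≤ u + 2 * c')
    (h3 : (w - u) % 3 = (2 * c') % 3)
    (hε : ε = 1 ∨ ε = 2) (hpar : 2 ∣ (w - u - c' - ε - 1))
    (L : List ℤ)
    (hL : L =
      seg (u + 1) 2 ((w - c' - ε - (u + 1)) / 2).toNat ++
      seg (w - c' - ε) 3 ((u + 2 * c' + 3 - w) / 3).toNat ++
      seg (u + c' - ε + 3) 2 ((w - (u + c' - ε + 3)) / 2).toNat ++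
      [w] ++
      seg (w - c') 3 ((u + 2 * c' - w) / 3).toNat ++
      [u + c'] ++
      seg u 2 ((w - c' + ε - 3 - u) / 2).toNat ++
      seg (w - c' + ε - 3) 3 ((u + 2 * c' + 3 - w) / 3).toNat ++
      seg (u + c' + ε) 2 ((w - 1 - (u + c' + ε)) / 2).toNat ++
      [w - 1]) :
    L.Chain' (fun a b => b - a ∈ ({2, 3, -c'} : Set ℤ)) ∧
    L.Nodup ∧
    ∀ z : ℤ, z ∈ L ↔ u ≤ z ∧ z ≤ w :=
  stmt_12_general c' u w ε h1 h2 h3 hε hpar L hL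
end

section
/- Let u, w be integers with u ≤ w and suppose k = w − u + 1 satisfies k ≤ n, c' + 3 ≤ k ≤ 2c' + 2, and k + c' ≢ 3 (mod 6), where 3 < c' and c = n − c'. Then the subgraph of Circ(n; 2, 3, c) induced by the interval of vertices {u, u+1, ..., w} (taken mod n) has a hamiltonian path starting at u + 1 and ending at w − 1 or at w. -/
/-- `IntervalHamPath n c u k` : in the circulant digraph Circ(n; 2, 3, c) on ℤ_n,
the subgraph induced by the interval of k consecutive vertices
I(u, u+k−1) = {u, u+1, ..., u+k−1} (mod n) has a hamiltonian path that starts at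
u + 1 and ends at u + k − 2 (= w − 1) or at u + k − 1 (= w). -/
def IntervalHamPath (n c k : ℕ) (u : ℤ) : Prop :=
  ∃ x : Fin k → ZMod n,
    Function.Injective x ∧
    (∀ v : ZMod n, (∃ j : ℕ, j < k ∧ v = ((u + j : ℤ) : ZMod n)) ↔ ∃ i, x i = v) ∧
    (∀ i : Fin k, ∀ h : (i : ℕ) + 1 < k,
      x ⟨(i : ℕ) + 1, h⟩ - x i ∈ ({2, 3, (c : ZMod n)} : Set (ZMod n))) ∧
    ∀ h : 0 < k,
      x ⟨0, h⟩ = ((u + 1 : ℤ) : ZMod n) ∧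
      (x ⟨k - 1, Nat.sub_lt h Nat.one_pos⟩ = ((u + k - 2 : ℤ) : ZMod n) ∨
        x ⟨k - 1, Nat.sub_lt h Nat.one_pos⟩ = ((u + k - 1 : ℤ) : ZMod n))

/-- Key reduction: an explicit offset sequence `f` with the right properties
gives an interval hamiltonian path. -/
lemma intervalHamPath_of_offsets (n c' c k : ℕ) (u : ℤ) (f : ℕ → ℤ)
    (hc'n : c' < n) (hc : c = n - c') (hkn : k ≤ n) (hk0 : 0 < k)
    (hrange : ∀ i, i < k → 0 ≤ f i ∧ f i < k)
    (hinj : ∀ i, i < k → ∀ j, j < k → f i = f j → i = j)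
    (hstep : ∀ i, i + 1 < k →
      f (i + 1) - f i = 2 ∨ f (i + 1) - f i = 3 ∨ f (i + 1) - f i = -(c' : ℤ))
    (h0 : f 0 = 1)
    (hlast : f (k - 1) = (k : ℤ) - 2 ∨ f (k - 1) = (k : ℤ) - 1) :
    IntervalHamPath n c k u := by
  have hn0 : 0 < n := lt_of_le_of_lt (Nat.zero_le _) hc'n
  -- the key injectivity fact at the level of ZMod values
  have main_inj : ∀ i, i < k → ∀ j, j < k →
      ((u + f i : ℤ) : ZMod n) = ((u + f j : ℤ) : ZMod n) → i = j := by
    intro i hi j hj h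
    have hd : ((u + f i - (u + f j) : ℤ) : ZMod n) = 0 := by
      push_cast
      rw [sub_eq_zero]
      push_cast at h
      exact h
    rw [ZMod.intCast_zmod_eq_zero_iff_dvd] at hd
    have hd' : (n : ℤ) ∣ (f i - f j) := by
      have : u + f i - (u + f j) = f i - f j := by ring
      rwa [this] at hd
    have h1 := hrange i hi
    have h2 := hrange j hj
    have hfij : f i = f j := by
      rcases eq_or_ne (f i - f j) 0 with h' | h'
      · linarith
      · exfalso
        have habs : |f i - f j| < n := by
          rw [abs_lt]
          constructor <;> [linarith [h1.1, h2.2]; linarith [h1.2, h2.1]]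
        have := Int.le_of_dvd (abs_pos.mpr h') ((dvd_abs _ _).mpr hd')
        linarith
    exact hinj i hi j hj hfij
  refine ⟨fun i => ((u + f i : ℤ) : ZMod n), ?_, ?_, ?_, ?_⟩
  · -- injectivity
    intro i j h
    exact Fin.ext (main_inj i i.2 j j.2 h)
  · -- image is the interval
    intro v
    constructor
    · rintro ⟨j, hj, rfl⟩
      -- surjectivity from injectivity on Fin k
      have hFinj : Function.Injective
          (fun i : Fin k => (⟨(f i).toNat, by
            have := hrange i i.2
            omega⟩ : Fin k)) := by
        intro a b hab
        have hval : (f a).toNat = (f b).toNat := congrArg Fin.val hab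
        have ha := hrange a a.2
        have hb := hrange b b.2
        have : f a = f b := by omega
        exact Fin.ext (hinj a a.2 b b.2 this)
      have hFsurj := Finite.injective_iff_surjective.mp hFinj
      obtain ⟨i, hi⟩ := hFsurj ⟨j, hj⟩
      refine ⟨i, ?_⟩
      have hval : (f i).toNat = j := congrArg Fin.val hi
      have := hrange i i.2
      have hfi : f i = (j : ℤ) := by omega
      show ((u + f (i : ℕ) : ℤ) : ZMod n) = ((u + (j : ℕ) : ℤ) : ZMod n)
      rw [hfi]
    · rintro ⟨i, rfl⟩
      have := hrange i i.2
      refine ⟨(f i).toNat, by omega, ?_⟩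
      have h' : ((f i).toNat : ℤ) = f i := Int.toNat_of_nonneg this.1
      show ((u + f (i : ℕ) : ℤ) : ZMod n) = ((u + ((f (i : ℕ)).toNat : ℤ) : ℤ) : ZMod n)
      rw [h']
  · -- step condition
    intro i h
    have hmem := hstep i h
    have hcast : ((u + f ((i : ℕ) + 1) : ℤ) : ZMod n) - ((u + f i : ℤ) : ZMod n)
        = ((f ((i : ℕ) + 1) - f i : ℤ) : ZMod n) := by push_cast; ring
    simp only [Set.mem_insert_iff, Set.mem_singleton_iff]
    rcases hmem with h' | h' | h'
    · left; rw [hcast, h']; push_cast; ring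
    · right; left; rw [hcast, h']; push_cast; ring
    · right; right
      rw [hcast, h', hc]
      have hle : c' ≤ n := hc'n.le
      push_cast [Nat.cast_sub hle]
      rw [ZMod.natCast_self]
      ring
  · -- endpoints
    intro h
    constructor
    · simp only [h0]
    · rcases hlast with h' | h'
      · left
        show ((u + f (k - 1) : ℤ) : ZMod n) = _
        rw [h']; congr 1; ring
      · right
        show ((u + f (k - 1) : ℤ) : ZMod n) = _
        rw [h']; congr 1; ring

set_option maxHeartbeats 1600000 in
/-- Lemma 8 of the paper: if 3 < c', c = n − c', and k = w − u + 1 satisfies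
k ≤ n, c' + 3 ≤ k ≤ 2c' + 2, and k + c' ≢ 3 (mod 6), then the subgraph of
Circ(n; 2, 3, c) induced by the interval {u, ..., w} has a hamiltonian path
from u + 1 to w − 1 or to w. -/
theorem stmt_14 (n c' c k : ℕ) (u w : ℤ)
    (hc' : 3 < c') (hc'n : c' < n) (hc : c = n - c')
    (huw : u ≤ w) (hk : (k : ℤ) = w - u + 1)
    (hkn : k ≤ n) (hk1 : c' + 3 ≤ k) (hk2 : k ≤ 2 * c' + 2)
    (hk3 : (k + c') % 6 ≠ 3) :
    IntervalHamPath n c k u := by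
  have hk0 : 0 < k := by omega
  clear huw hk
  -- the family of paths with segments (qa,p,qb),(0,p-1,0),(qb,p,qa+e) for e = 0, 1
  have mainF : ∀ p qa qb : ℕ,
      ((3 * p + k = 2 * c' + 4 ∧ qa + qb + c' + 3 = k) ∨
        (3 * p + k = 2 * c' + 5 ∧ qa + qb + c' + 4 = k)) →
      (qb = qa ∨ qb = qa + 1) → IntervalHamPath n c k u := by
    intro p qa qb hpq hba
    have main : ∀ f : ℕ → ℤ, (∀ i : ℕ,
        (i ≤ qa ∧ f i = 2 * (i : ℤ) + 1) ∨
        (qa < i ∧ i ≤ qa + p ∧ f i = 3 * (i : ℤ) - qa + 1) ∨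
        (qa + p < i ∧ i ≤ qa + qb + p ∧ f i = 2 * (i : ℤ) + p + 1) ∨
        (qa + qb + p < i ∧ i ≤ qa + qb + 2 * p ∧
          f i = 3 * (i : ℤ) - qa - qb - c' - 2) ∨
        (qa + qb + 2 * p < i ∧ i ≤ qa + 2 * qb + 2 * p + 1 ∧
          f i = 2 * (i : ℤ) + 2 * p - 2 * c' - 4) ∨
        (qa + 2 * qb + 2 * p + 1 < i ∧ i ≤ qa + 2 * qb + 3 * p + 1 ∧
          f i = 3 * (i : ℤ) - qa - 2 * qb - 2 * c' - 5) ∨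
        (qa + 2 * qb + 3 * p + 1 < i ∧ f i = 2 * (i : ℤ) + 3 * p - 2 * c' - 4)) →
        IntervalHamPath n c k u := by
      intro f hchar
      apply intervalHamPath_of_offsets n c' c k u f hc'n hc hkn hk0
      · intro i hi; have h1 := hchar i; omega
      · intro i hi j hj hf; have h1 := hchar i; have h2 := hchar j; omega
      · intro i hi; have h1 := hchar i; have h2 := hchar (i + 1); omega
      · have h1 := hchar 0; omega
      · have h1 := hchar (k - 1); omega
    apply main (fun i => if i ≤ qa then 2 * (i : ℤ) + 1
        else if i ≤ qa + p then 3 * (i : ℤ) - qa + 1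
        else if i ≤ qa + qb + p then 2 * (i : ℤ) + p + 1
        else if i ≤ qa + qb + 2 * p then 3 * (i : ℤ) - qa - qb - c' - 2
        else if i ≤ qa + 2 * qb + 2 * p + 1 then 2 * (i : ℤ) + 2 * p - 2 * c' - 4
        else if i ≤ qa + 2 * qb + 3 * p + 1 then 3 * (i : ℤ) - qa - 2 * qb - 2 * c' - 5
        else 2 * (i : ℤ) + 3 * p - 2 * c' - 4)
    intro i; split_ifs <;> omega
  have h3 : (k + c') % 3 = 0 ∨ (k + c') % 3 = 1 ∨ (k + c') % 3 = 2 := by omega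
  rcases h3 with h3 | h3 | h3
  · -- shape G : segments (qa,p,0),(qb,p,qb),(0,p,qa), e = 0, d odd
    obtain ⟨p, qa, qb, hp, hq, hba⟩ :
        ∃ p qa qb : ℕ, 3 * p + k = 2 * c' + 3 ∧ qa + qb + c' + 3 = k ∧ qb = qa + 1 :=
      ⟨(2 * c' + 3 - k) / 3, (k - c' - 4) / 2, (k - c' - 4) / 2 + 1, by omega, by omega, rfl⟩
    clear hk3 h3 mainF
    have main : ∀ f : ℕ → ℤ, (∀ i : ℕ,
        (i ≤ qa ∧ f i = 2 * (i : ℤ) + 1) ∨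
        (qa < i ∧ i ≤ qa + p ∧ f i = 3 * (i : ℤ) - qa + 1) ∨
        (qa + p < i ∧ i ≤ qa + qb + p + 1 ∧ f i = 2 * (i : ℤ) + p - c' - 1) ∨
        (qa + qb + p + 1 < i ∧ i ≤ qa + qb + 2 * p + 1 ∧
          f i = 3 * (i : ℤ) - qa - qb - c' - 2) ∨
        (qa + qb + 2 * p + 1 < i ∧ i ≤ qa + 2 * qb + 2 * p + 1 ∧
          f i = 2 * (i : ℤ) + 2 * p - c' - 1) ∨
        (qa + 2 * qb + 2 * p + 1 < i ∧ i ≤ qa + 2 * qb + 3 * p + 2 ∧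
          f i = 3 * (i : ℤ) - qa - 2 * qb - 2 * c' - 5) ∨
        (qa + 2 * qb + 3 * p + 2 < i ∧ f i = 2 * (i : ℤ) + 3 * p - 2 * c' - 3)) →
        IntervalHamPath n c k u := by
      intro f hchar
      apply intervalHamPath_of_offsets n c' c k u f hc'n hc hkn hk0
      · intro i hi; have h1 := hchar i; omega
      · intro i hi j hj hf; have h1 := hchar i; have h2 := hchar j; omega
      · intro i hi; have h1 := hchar i; have h2 := hchar (i + 1); omega
      · have h1 := hchar 0; omega
      · have h1 := hchar (k - 1); omega
    apply main (fun i => if i ≤ qa then 2 * (i : ℤ) + 1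
        else if i ≤ qa + p then 3 * (i : ℤ) - qa + 1
        else if i ≤ qa + qb + p + 1 then 2 * (i : ℤ) + p - c' - 1
        else if i ≤ qa + qb + 2 * p + 1 then 3 * (i : ℤ) - qa - qb - c' - 2
        else if i ≤ qa + 2 * qb + 2 * p + 1 then 2 * (i : ℤ) + 2 * p - c' - 1
        else if i ≤ qa + 2 * qb + 3 * p + 2 then 3 * (i : ℤ) - qa - 2 * qb - 2 * c' - 5
        else 2 * (i : ℤ) + 3 * p - 2 * c' - 3)
    intro i; split_ifs <;> omega
  · -- shape F with e = 0
    exact mainF ((2 * c' + 4 - k) / 3) ((k - c' - 3) / 2) ((k - c' - 3) - (k - c' - 3) / 2)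
      (Or.inl ⟨by omega, by omega⟩) (by omega)
  · rcases eq_or_ne k (c' + 3) with hd | hd
    · -- shape H : segments (0,p,0),(0,p+1,0),(0,p,0), k = c' + 3
      obtain ⟨p, hp⟩ : ∃ p : ℕ, 3 * p + 1 = c' := ⟨(c' - 1) / 3, by omega⟩
      clear hk3 h3 mainF
      have main : ∀ f : ℕ → ℤ, (∀ i : ℕ,
          (i ≤ p ∧ f i = 3 * (i : ℤ) + 1) ∨
          (p < i ∧ i ≤ 2 * p + 2 ∧ f i = 3 * (i : ℤ) - c' - 2) ∨
          (2 * p + 2 < i ∧ f i = 3 * (i : ℤ) - 2 * c' - 5)) →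
          IntervalHamPath n c k u := by
        intro f hchar
        apply intervalHamPath_of_offsets n c' c k u f hc'n hc hkn hk0
        · intro i hi; have h1 := hchar i; omega
        · intro i hi j hj hf; have h1 := hchar i; have h2 := hchar j; omega
        · intro i hi; have h1 := hchar i; have h2 := hchar (i + 1); omega
        · have h1 := hchar 0; omega
        · have h1 := hchar (k - 1); omega
      apply main (fun i => if i ≤ p then 3 * (i : ℤ) + 1
          else if i ≤ 2 * p + 2 then 3 * (i : ℤ) - c' - 2
          else 3 * (i : ℤ) - 2 * c' - 5)
      intro i; split_ifs <;> omega
    · -- shape F with e = 1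
      exact mainF ((2 * c' + 5 - k) / 3) ((k - c' - 4) / 2) ((k - c' - 4) - (k - c' - 4) / 2)
        (Or.inr ⟨by omega, by omega⟩) (by omega)
end

section
/- Let n = 6m with m ≥ 1, let 3 < c < n with c = n − c' and 3 < c' < 3m, and suppose n can be written as n = k₁ + ... + k_s where each kᵢ satisfies c' + 3 ≤ kᵢ ≤ 2c' + 2 and kᵢ + c' ≢ 3 (mod 6). If moreover for every interval of kᵢ consecutive vertices the induced subgraph of Circ(n; 2,3,c) has a hamiltonian path from the second vertex of the interval to one of the last two vertices, then Circ(n; 2, 3, c) has a hamiltonian cycle. -/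
/-- `HasHamCycle n S` : the circulant digraph Circ(n; S) on ℤ_n has a
hamiltonian cycle. -/
def HasHamCycle (n : ℕ) (S : Set (ZMod n)) : Prop :=
  ∃ x : Fin n → ZMod n, Function.Bijective x ∧
    ∀ i : Fin n, x ⟨((i : ℕ) + 1) % n, Nat.mod_lt _ i.pos⟩ - x i ∈ S

/-! If the path of the interval `[u, u + k)` ends at `u + k - 2` or `u + k - 1` and the path
of the next interval starts at `u + k + 1`, the two are joined by a 3-arc or a 2-arc. Joining
the paths of the intervals of `n = k₁ + ⋯ + kₛ` in this way gives a hamiltonian path of `ℤ_n`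
from `1` to `n - 2` or `n - 1`, which one more 3-arc or 2-arc closes into a hamiltonian
cycle. -/

namespace Fin

variable {α : Sort*} {m n : ℕ}

theorem append_mk_of_lt (u : Fin m → α) (v : Fin n → α) {a : ℕ} (h : a < m + n)
    (ha : a < m) :
    append u v ⟨a, h⟩ = u ⟨a, ha⟩ :=
  append_left u v ⟨a, ha⟩

theorem append_mk_of_le (u : Fin m → α) (v : Fin n → α) {a : ℕ} (h : a < m + n)
    (ha : m ≤ a) :
    append u v ⟨a, h⟩ = v ⟨a - m, by omega⟩ := by
  rw [← append_right u v]
  congr 1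
  ext
  simp only [val_natAdd]
  omega

theorem exists_fin_add {P : Fin (m + n) → Prop} :
    (∃ i, P i) ↔ (∃ i : Fin m, P (castAdd n i)) ∨ ∃ j : Fin n, P (natAdd m j) := by
  refine ⟨fun ⟨i, hi⟩ => ?_,
    fun h => h.elim (fun ⟨i, hi⟩ => ⟨_, hi⟩) (fun ⟨j, hj⟩ => ⟨_, hj⟩)⟩
  induction i using addCases with
  | left i => exact .inl ⟨i, hi⟩
  | right j => exact .inr ⟨j, hi⟩

end Fin

theorem ZMod.intCast_add_natCast_inj {n a b : ℕ} {u : ℤ} (ha : a < n) (hb : b < n)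
    (h : ((u + a : ℤ) : ZMod n) = ((u + b : ℤ) : ZMod n)) : a = b := by
  push_cast at h
  have := (ZMod.natCast_eq_natCast_iff' _ _ _).mp (add_left_cancel h)
  rwa [Nat.mod_eq_of_lt ha, Nat.mod_eq_of_lt hb] at this

theorem exists_lt_add_and_eq_iff {n k l : ℕ} {u : ℤ} {v : ZMod n} :
    (∃ j, j < k + l ∧ v = ((u + j : ℤ) : ZMod n)) ↔
      (∃ j, j < k ∧ v = ((u + j : ℤ) : ZMod n)) ∨
        ∃ j, j < l ∧ v = ((u + k + j : ℤ) : ZMod n) := by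
  constructor
  · rintro ⟨j, hj, rfl⟩
    rcases lt_or_ge j k with hjk | hjk
    · exact .inl ⟨j, hjk, rfl⟩
    · exact .inr ⟨j - k, by omega, by push_cast [hjk]; ring_nf⟩
  · rintro (⟨j, hj, rfl⟩ | ⟨j, hj, rfl⟩)
    · exact ⟨j, by omega, rfl⟩
    · exact ⟨k + j, by omega, by push_cast; ring_nf⟩

theorem sub_mem_of_eq_sub_two_or_sub_one {n c : ℕ} {x y : ZMod n} (b : ℤ)
    (hx : x = ((b - 2 : ℤ) : ZMod n) ∨ x = ((b - 1 : ℤ) : ZMod n))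
    (hy : y = ((b + 1 : ℤ) : ZMod n)) :
    y - x ∈ ({2, 3, (c : ZMod n)} : Set (ZMod n)) := by
  subst hy
  rcases hx with rfl | rfl
  · right; left; push_cast; ring
  · left; push_cast; ring

namespace IntervalHamPath

variable {n c k l : ℕ} {u : ℤ}

theorem zero : IntervalHamPath n c 0 u :=
  ⟨Fin.elim0, fun i => i.elim0, fun v => by simp, fun i => i.elim0,
    fun h => absurd h (lt_irrefl 0)⟩

theorem append (hkl : k + l ≤ n) (hp : IntervalHamPath n c k u)
    (hq : IntervalHamPath n c l (u + k)) : IntervalHamPath n c (k + l) u := by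
  rcases Nat.eq_zero_or_pos k with rfl | hk
  · simpa using hq
  rcases Nat.eq_zero_or_pos l with rfl | hl
  · simpa using hp
  obtain ⟨p, p_inj, p_range, p_step, p_ends⟩ := hp
  obtain ⟨q, q_inj, q_range, q_step, q_ends⟩ := hq
  obtain ⟨p_first, p_last⟩ := p_ends hk
  obtain ⟨q_first, q_last⟩ := q_ends hl
  have disjoint : ∀ i j, p i ≠ q j := by
    intro i j h
    obtain ⟨a, ha, hpa⟩ := (p_range _).2 ⟨i, rfl⟩
    obtain ⟨b, hb, hqb⟩ := (q_range _).2 ⟨j, rfl⟩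
    have := ZMod.intCast_add_natCast_inj (n := n) (u := u) (a := a) (b := k + b)
      (by omega) (by omega)
      (by rw [← hpa, h, hqb]; push_cast; ring)
    omega
  refine ⟨Fin.append p q, Fin.append_injective_iff.2 ⟨p_inj, q_inj, disjoint⟩, fun v => ?_,
    fun i hi => ?_, fun _ => ⟨?_, ?_⟩⟩
  · rw [exists_lt_add_and_eq_iff, p_range, q_range, Fin.exists_fin_add]
    simp only [Fin.append_left, Fin.append_right]
  · rcases lt_trichotomy ((i : ℕ) + 1) k with h | h | h
    · rw [Fin.append_mk_of_lt _ _ _ h, Fin.append_mk_of_lt _ _ _ (by omega)]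
      exact p_step ⟨i, _⟩ h
    · rw [Fin.append_mk_of_le _ _ _ h.ge, Fin.append_mk_of_lt _ _ _ (by omega)]
      have e1 : (⟨(i : ℕ) + 1 - k, by omega⟩ : Fin l) = ⟨0, hl⟩ :=
        Fin.ext (by simp only; omega)
      have e2 : (⟨(i : ℕ), by omega⟩ : Fin k) = ⟨k - 1, by omega⟩ :=
        Fin.ext (by simp only; omega)
      rw [e1, e2]
      exact sub_mem_of_eq_sub_two_or_sub_one (u + k) p_last q_first
    · rw [Fin.append_mk_of_le _ _ _ (by omega), Fin.append_mk_of_le _ _ _ (by omega)]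
      have e : (⟨(i : ℕ) + 1 - k, by omega⟩ : Fin l) = ⟨(i - k : ℕ) + 1, by omega⟩ :=
        Fin.ext (by simp only; omega)
      rw [e]
      exact q_step ⟨i - k, by omega⟩ _
  · rw [Fin.append_mk_of_lt _ _ _ hk]
    exact p_first
  · rw [Fin.append_mk_of_le _ _ _ (by omega)]
    have e : (⟨k + l - 1 - k, by omega⟩ : Fin l) = ⟨l - 1, by omega⟩ :=
      Fin.ext (by simp only; omega)
    rw [e]
    rcases q_last with h | h <;> rw [h] <;> [left; right] <;> push_cast <;> ring

theorem list_sum {ks : List ℕ} (hks : ∀ u : ℤ, ∀ k ∈ ks, IntervalHamPath n c k u)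
    (hsum : ks.sum ≤ n) (u : ℤ) : IntervalHamPath n c ks.sum u := by
  induction ks generalizing u with
  | nil => exact zero
  | cons k ks ih =>
    rw [List.sum_cons] at hsum ⊢
    exact (hks u k List.mem_cons_self).append hsum
      (ih (fun u k hk => hks u k (List.mem_cons_of_mem _ hk)) (by omega) _)

theorem hasHamCycle (hn : 0 < n) (h : IntervalHamPath n c n u) :
    HasHamCycle n ({2, 3, (c : ZMod n)} : Set (ZMod n)) := by
  have : NeZero n := ⟨hn.ne'⟩
  obtain ⟨x, x_inj, -, x_step, x_ends⟩ := h
  obtain ⟨x_first, x_last⟩ := x_ends hn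
  refine ⟨x, (Fintype.bijective_iff_injective_and_card x).2 ⟨x_inj, by simp⟩, fun i => ?_⟩
  by_cases hi : (i : ℕ) + 1 < n
  · have e : (⟨((i : ℕ) + 1) % n, Nat.mod_lt _ i.pos⟩ : Fin n) = ⟨i + 1, hi⟩ :=
      Fin.ext (Nat.mod_eq_of_lt hi)
    rw [e]
    exact x_step i hi
  · have e1 : (⟨((i : ℕ) + 1) % n, Nat.mod_lt _ i.pos⟩ : Fin n) = ⟨0, hn⟩ :=
      Fin.ext (by simp only; rw [show (i : ℕ) + 1 = n by omega, Nat.mod_self])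
    have e2 : i = ⟨n - 1, by omega⟩ := Fin.ext (by simp only; omega)
    rw [e1, e2]
    refine sub_mem_of_eq_sub_two_or_sub_one (u + n) x_last ?_
    rw [x_first]
    simp

end IntervalHamPath

theorem stmt_15_general (m n c : ℕ) (hm : 1 ≤ m) (hn : n = 6 * m)
    (ks : List ℕ) (hsum : ks.sum = n)
    (hpaths : ∀ u : ℤ, ∀ k ∈ ks, IntervalHamPath n c k u) :
    HasHamCycle n ({2, 3, (c : ZMod n)} : Set (ZMod n)) := by
  have h := IntervalHamPath.list_sum hpaths hsum.le 0
  rw [hsum] at h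
  exact h.hasHamCycle (by omega)

/-- If n = 6m, 3 < c' < 3m, c = n − c', and n = k₁ + ⋯ + k_s with each kᵢ in
[c'+3, 2c'+2] and kᵢ + c' ≢ 3 (mod 6), and every interval of kᵢ consecutive
vertices has a hamiltonian path from its second vertex to one of its last two
vertices, then Circ(n; 2, 3, c) has a hamiltonian cycle. -/
theorem stmt_15 (m n c' c : ℕ) (hm : 1 ≤ m) (hn : n = 6 * m)
    (hc'1 : 3 < c') (hc'2 : c' < 3 * m) (hc : c = n - c')
    (ks : List ℕ) (hsum : ks.sum = n)
    (hks : ∀ k ∈ ks, c' + 3 ≤ k ∧ k ≤ 2 * c' + 2 ∧ (k + c') % 6 ≠ 3)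
    (hpaths : ∀ u : ℤ, ∀ k ∈ ks, IntervalHamPath n c k u) :
    HasHamCycle n ({2, 3, (c : ZMod n)} : Set (ZMod n)) :=
  stmt_15_general m n c hm hn ks hsum hpaths
end
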